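/- arXiv:1806.10363 — 2 statements merged into one kernel-verified Lean document; each statement's English description precedes it below -/
import Mathlib

section
/- There exists an upward closed set A of Turing degrees (i.e., d ∈ A and d ≤ d' imply d' ∈ A) such that for no pair of equivalence relations R, S on ℕ does Spec⇒(R,S) = A. -/
/-- `OracleRecursiveIn O f` means the partial function `f` is partial recursive in the
(total) oracle `O`. -/
inductive OracleRecursiveIn (O : ℕ → ℕ) : (ℕ →. ℕ) → Prop
  | zero : OracleRecursiveIn O (pure 0)
  | succ : OracleRecursiveIn O Nat.succ
  | left : OracleRecursiveIn O ↑fun n : ℕ => n.unpair.1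
  | right : OracleRecursiveIn O ↑fun n : ℕ => n.unpair.2
  | oracle : OracleRecursiveIn O ↑O
  | pair {f g} : OracleRecursiveIn O f → OracleRecursiveIn O g →
      OracleRecursiveIn O fun n => Nat.pair <$> f n <*> g n
  | comp {f g} : OracleRecursiveIn O f → OracleRecursiveIn O g →
      OracleRecursiveIn O fun n => g n >>= f
  | prec {f g} : OracleRecursiveIn O f → OracleRecursiveIn O g →
      OracleRecursiveIn O (Nat.unpaired fun a n =>
        n.rec (f a) fun y IH => do let i ← IH; g (Nat.pair a (Nat.pair y i)))
  | rfind {f} : OracleRecursiveIn O f →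
      OracleRecursiveIn O fun a => Nat.rfind fun n => (fun m => m = 0) <$> f (Nat.pair a n)

/-- Turing reducibility between total functions on `ℕ`. -/
def OracleTuringReducible (f g : ℕ → ℕ) : Prop := OracleRecursiveIn g ↑f

/-- Turing equivalence of total functions on `ℕ`. -/
def OracleTuringEquivalent (f g : ℕ → ℕ) : Prop := OracleTuringReducible f g ∧ OracleTuringReducible g f

theorem OracleTuringReducible.refl (f : ℕ → ℕ) : OracleTuringReducible f f := OracleRecursiveIn.oracle

theorem OracleRecursiveIn.trans' {f : ℕ →. ℕ} {g h : ℕ → ℕ}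
    (hf : OracleRecursiveIn g f) (hg : OracleTuringReducible g h) : OracleRecursiveIn h f := by
  induction hf with
  | zero => exact .zero
  | succ => exact .succ
  | left => exact .left
  | right => exact .right
  | oracle => exact hg
  | pair _ _ ih₁ ih₂ => exact .pair ih₁ ih₂
  | comp _ _ ih₁ ih₂ => exact .comp ih₁ ih₂
  | prec _ _ ih₁ ih₂ => exact .prec ih₁ ih₂
  | rfind _ ih => exact .rfind ih

theorem OracleTuringReducible.trans {f g h : ℕ → ℕ}
    (h₁ : OracleTuringReducible f g) (h₂ : OracleTuringReducible g h) : OracleTuringReducible f h :=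
  OracleRecursiveIn.trans' h₁ h₂

/-- The setoid of Turing equivalence. -/
def turingSetoid : Setoid (ℕ → ℕ) :=
  ⟨OracleTuringEquivalent,
    fun f => ⟨.refl f, .refl f⟩,
    fun ⟨h₁, h₂⟩ => ⟨h₂, h₁⟩,
    fun ⟨a₁, a₂⟩ ⟨b₁, b₂⟩ => ⟨a₁.trans b₁, b₂.trans a₂⟩⟩

/-- Turing degrees. -/
def OracleTuringDegree : Type := Quotient turingSetoid

/-- The Turing degree of a total function. -/
def OracleTuringDegree.deg (f : ℕ → ℕ) : OracleTuringDegree := Quotient.mk turingSetoid f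

instance : LE OracleTuringDegree :=
  ⟨fun d₁ d₂ =>
    Quotient.liftOn₂ d₁ d₂ OracleTuringReducible
      (fun _ _ _ _ h h' =>
        propext ⟨fun hr => (h.2.trans hr).trans h'.1, fun hr => (h.1.trans hr).trans h'.2⟩)⟩

instance : LT OracleTuringDegree := ⟨fun d₁ d₂ => d₁ ≤ d₂ ∧ ¬d₂ ≤ d₁⟩

/-- The least Turing degree. -/
def OracleTuringDegree.zero : OracleTuringDegree := OracleTuringDegree.deg fun _ => 0

/-- A partial function is computable in a Turing degree if it is recursive in some
(equivalently, any) representative of that degree. -/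
def OracleTuringDegree.ComputableIn (d : OracleTuringDegree) (f : ℕ →. ℕ) : Prop :=
  Quotient.liftOn d (fun g => OracleRecursiveIn g f)
    (fun _ _ h => propext ⟨fun hr => hr.trans' h.1, fun hr => hr.trans' h.2⟩)

open Classical in
/-- The characteristic function of a set of naturals. -/
noncomputable def charFun (A : Set ℕ) : ℕ → ℕ := fun n => if n ∈ A then 1 else 0

/-- Turing reducibility between sets of naturals. -/
noncomputable def SetTuringReducible (A B : Set ℕ) : Prop :=
  OracleTuringReducible (charFun A) (charFun B)

/-- The Turing degree of a set of naturals. -/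
noncomputable def OracleTuringDegree.degSet (A : Set ℕ) : OracleTuringDegree :=
  OracleTuringDegree.deg (charFun A)

/-- `R` is `d`-computably reducible to `S`. -/
def ReducibleIn (d : OracleTuringDegree) (R S : ℕ → ℕ → Prop) : Prop :=
  ∃ f : ℕ → ℕ, d.ComputableIn ↑f ∧ ∀ x y, R x y ↔ S (f x) (f y)

/-- The reducibility spectrum of the pair `(R, S)`. -/
def SpecRed (R S : ℕ → ℕ → Prop) : Set OracleTuringDegree := {d | ReducibleIn d R S}

/-- The bi-reducibility spectrum of the pair `(R, S)`. -/
def SpecBired (R S : ℕ → ℕ → Prop) : Set OracleTuringDegree :=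
  {d | ReducibleIn d R S ∧ ReducibleIn d S R}

/-- The equivalence relation generated by a set `A`: two numbers are equivalent
iff they are equal or both belong to `A`. -/
def genRel (A : Set ℕ) : ℕ → ℕ → Prop := fun x y => x = y ∨ (x ∈ A ∧ y ∈ A)

/-- A ceer: an equivalence relation whose set of pairs is computably enumerable. -/
def Ceer (R : ℕ → ℕ → Prop) : Prop :=
  Equivalence R ∧ REPred fun p : ℕ × ℕ => R p.1 p.2

/-- A computably enumerable set of naturals. -/
def CePred (A : Set ℕ) : Prop := REPred (· ∈ A)

/-- A partial transversal of `R`: a set any two distinct elements of which are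
`R`-inequivalent. -/
def PartialTransversal (R : ℕ → ℕ → Prop) (A : Set ℕ) : Prop :=
  ∀ x ∈ A, ∀ y ∈ A, x ≠ y → ¬R x y

/-- An introreducible set: an infinite set computable from each of its infinite subsets. -/
def Introreducible (B : Set ℕ) : Prop :=
  B.Infinite ∧ ∀ C : Set ℕ, C ⊆ B → C.Infinite → SetTuringReducible B C


/-!
Pairs of relations on `ℕ` are only continuum many, hence so are reducibility spectra. But a
perfect set `{x_r | r : ℕ → Bool}` of pairwise Turing incomparable functions yields `2 ^ 𝔠`
upward closed sets of degrees: the union of the upper cones of the `x_r` with `r ∈ S`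
determines `S`.

The `x_r` are built by finite extension forcing along the full binary tree. At each level, for
every ordered pair of distinct nodes `(u, v)` and the code `Φ` treated at that level, the
strings at `u` and `v` are extended so that `Φ` with any oracle extending the first string
disagrees with every function extending the second. By the use principle this is always
possible: either some extension of the first string forces a value of `Φ` at the next position
of the second string, and we put a different value there, or no value can be forced there at all.
-/

open Filter Topology

inductive OracleCode : Type
  | zero : OracleCode
  | succ : OracleCode
  | left : OracleCode
  | right : OracleCode
  | oracle : OracleCode
  | pair : OracleCode → OracleCode → OracleCode
  | comp : OracleCode → OracleCode → OracleCode
  | prec : OracleCode → OracleCode → OracleCode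
  | rfind : OracleCode → OracleCode

namespace OracleCode

def eval (g : ℕ → ℕ) : OracleCode → ℕ →. ℕ
  | zero => pure 0
  | succ => Nat.succ
  | left => ↑fun n : ℕ => n.unpair.1
  | right => ↑fun n : ℕ => n.unpair.2
  | oracle => ↑g
  | pair a b => fun n => Nat.pair <$> eval g a n <*> eval g b n
  | comp a b => fun n => eval g b n >>= eval g a
  | prec a b => Nat.unpaired fun x n =>
      n.rec (eval g a x) fun y IH => do let i ← IH; eval g b (Nat.pair x (Nat.pair y i))
  | rfind a => fun x => Nat.rfind fun n => (fun m => m = 0) <$> eval g a (Nat.pair x n)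

def encode : OracleCode → ℕ
  | zero => 0
  | succ => 1
  | left => 2
  | right => 3
  | oracle => 4
  | pair a b => 4 * Nat.pair a.encode b.encode + 5
  | comp a b => 4 * Nat.pair a.encode b.encode + 6
  | prec a b => 4 * Nat.pair a.encode b.encode + 7
  | rfind a => 4 * a.encode + 8

theorem encode_injective : Function.Injective encode := by
  intro c c' h
  induction c generalizing c' <;> cases c' <;> grind [encode, Nat.pair_eq_pair]

instance : Countable OracleCode := encode_injective.countable

instance : Nonempty OracleCode := ⟨zero⟩

end OracleCode

theorem OracleRecursiveIn.exists_code {g : ℕ → ℕ} {f : ℕ →. ℕ} (h : OracleRecursiveIn g f) :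
    ∃ c : OracleCode, c.eval g = f := by
  induction h with
  | zero => exact ⟨.zero, rfl⟩
  | succ => exact ⟨.succ, rfl⟩
  | left => exact ⟨.left, rfl⟩
  | right => exact ⟨.right, rfl⟩
  | oracle => exact ⟨.oracle, rfl⟩
  | pair _ _ ih₁ ih₂ =>
    obtain ⟨⟨c₁, rfl⟩, ⟨c₂, rfl⟩⟩ := And.intro ih₁ ih₂
    exact ⟨.pair c₁ c₂, rfl⟩
  | comp _ _ ih₁ ih₂ =>
    obtain ⟨⟨c₁, rfl⟩, ⟨c₂, rfl⟩⟩ := And.intro ih₁ ih₂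
    exact ⟨.comp c₁ c₂, rfl⟩
  | prec _ _ ih₁ ih₂ =>
    obtain ⟨⟨c₁, rfl⟩, ⟨c₂, rfl⟩⟩ := And.intro ih₁ ih₂
    exact ⟨.prec c₁ c₂, rfl⟩
  | rfind _ ih =>
    obtain ⟨c, rfl⟩ := ih
    exact ⟨.rfind c, rfl⟩

theorem OracleCode.eventually_mem_eval {g : ℕ → ℕ} (c : OracleCode) {n y : ℕ}
    (h : y ∈ c.eval g n) : ∀ᶠ g' in 𝓝 g, y ∈ c.eval g' n := by
  induction c generalizing n y with
  | zero | succ | left | right => exact .of_forall fun _ => h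
  | oracle =>
    obtain rfl : y = g n := Part.mem_some_iff.1 h
    filter_upwards [(continuous_apply n).continuousAt.eventually_mem
      (isOpen_discrete {g n} |>.mem_nhds rfl)] with g' hg'
    exact Part.mem_some_iff.2 hg'.symm
  | pair a b iha ihb =>
    obtain ⟨u, hu, v, hv, rfl⟩ : ∃ u ∈ a.eval g n, ∃ v ∈ b.eval g n, Nat.pair u v = y := by
      simpa [eval, Seq.seq] using h
    filter_upwards [iha hu, ihb hv] with g' ha hb
    exact Part.mem_bind_iff.2 ⟨Nat.pair u, Part.mem_map _ ha, Part.mem_map _ hb⟩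
  | comp a b iha ihb =>
    obtain ⟨w, hw, hy⟩ := Part.mem_bind_iff.1 h
    filter_upwards [iha hy, ihb hw] with g' ha hb
    exact Part.mem_bind_iff.2 ⟨w, hb, ha⟩
  | prec a b iha ihb =>
    suffices ∀ j x y : ℕ, y ∈ (j.rec (a.eval g x) fun k IH => IH >>= fun i =>
        b.eval g (Nat.pair x (Nat.pair k i)) : Part ℕ) → ∀ᶠ g' in 𝓝 g,
          y ∈ (j.rec (a.eval g' x) fun k IH => IH >>= fun i =>
            b.eval g' (Nat.pair x (Nat.pair k i)) : Part ℕ) from this _ _ _ h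
    intro j
    induction j with
    | zero => exact fun x y => iha
    | succ j ih =>
      intro x y hy
      obtain ⟨w, hw, hy⟩ := Part.mem_bind_iff.1 hy
      filter_upwards [ih x w hw, ihb hy] with g' hw' hy'
      exact Part.mem_bind_iff.2 ⟨w, hw', hy'⟩
  | rfind a iha =>
    have hmap {x : ℕ} {t : Bool} (ht : t ∈ (fun m => decide (m = 0)) <$> a.eval g x) :
        ∀ᶠ g' in 𝓝 g, t ∈ (fun m => decide (m = 0)) <$> a.eval g' x := by
      obtain ⟨v, hv, rfl⟩ := (Part.mem_map_iff _).1 ht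
      filter_upwards [iha hv] with g' hv'
      exact Part.mem_map _ hv'
    obtain ⟨hy, hlt⟩ := Nat.mem_rfind.1 h
    have hlt' : ∀ᶠ g' in 𝓝 g, ∀ m ∈ Finset.range y,
        false ∈ (fun m => decide (m = 0)) <$> a.eval g' (Nat.pair n m) :=
      (eventually_all_finset _).2 fun m hm => hmap (hlt (Finset.mem_range.1 hm))
    filter_upwards [hmap hy, hlt'] with g' hy' hlt'
    exact Nat.mem_rfind.2 ⟨hy', fun hm => hlt' _ (Finset.mem_range.2 hm)⟩

def Extends (x : ℕ → ℕ) (σ : List ℕ) : Prop := ∀ i (hi : i < σ.length), x i = σ[i]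

namespace Extends

variable {x : ℕ → ℕ} {σ τ : List ℕ} {m : ℕ}

theorem of_prefix (hx : Extends x τ) (h : σ <+: τ) : Extends x σ := fun i hi =>
  (hx i (hi.trans_le h.length_le)).trans (h.getElem hi).symm

theorem prefix_map_range (hx : Extends x σ) {k : ℕ} (hk : σ.length ≤ k) :
    σ <+: (List.range k).map x := by
  rw [List.prefix_iff_eq_take]
  refine List.ext_getElem (by simpa using hk) fun i hi _ => ?_
  simp [← hx i hi]

theorem apply_length (hx : Extends x (σ ++ [m])) : x σ.length = m := by
  simpa using hx σ.length (by simp)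

end Extends

theorem Filter.Eventually.exists_extends {P : (ℕ → ℕ) → Prop} {x : ℕ → ℕ} {σ : List ℕ}
    (hP : ∀ᶠ g in 𝓝 x, P g) (hx : Extends x σ) :
    ∃ σ', σ <+: σ' ∧ ∀ g, Extends g σ' → P g := by
  obtain ⟨-, ⟨z, k, rfl⟩, hxz, hsub⟩ :=
    (PiNat.isTopologicalBasis_cylinders fun _ => ℕ).mem_nhds_iff.1 hP
  refine ⟨(List.range (max k σ.length)).map x, hx.prefix_map_range (le_max_right _ _),
    fun g hg => hsub fun i hi => ?_⟩
  have hik : i < max k σ.length := hi.trans_le (le_max_left _ _)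
  rw [hg i (by simpa using hik), ← hxz i hi]
  simp

def ForcesDisagree (c : OracleCode) (σ τ : List ℕ) : Prop :=
  ∃ n, ∀ x y, Extends x σ → Extends y τ → y n ∉ c.eval x n

theorem ForcesDisagree.mono {c : OracleCode} {σ σ' τ τ' : List ℕ} (h : ForcesDisagree c σ τ)
    (hσ : σ <+: σ') (hτ : τ <+: τ') : ForcesDisagree c σ' τ' :=
  let ⟨n, hn⟩ := h
  ⟨n, fun x y hx hy => hn x y (hx.of_prefix hσ) (hy.of_prefix hτ)⟩

theorem exists_forcesDisagree (c : OracleCode) (σ τ : List ℕ) :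
    ∃ p : List ℕ × List ℕ, σ <+: p.1 ∧ τ <+: p.2 ∧ ForcesDisagree c p.1 p.2 := by
  by_cases hforce : ∃ σ', σ <+: σ' ∧ ∃ m, ∀ x, Extends x σ' → m ∈ c.eval x τ.length
  · obtain ⟨σ', hσσ', m, hm⟩ := hforce
    refine ⟨(σ', τ ++ [m + 1]), hσσ', List.prefix_append _ _, τ.length, fun x y hx hy hy' => ?_⟩
    have := Part.mem_unique (hm x hx) hy'
    rw [hy.apply_length] at this
    omega
  · refine ⟨(σ, τ), List.prefix_rfl, List.prefix_rfl, τ.length, fun x y hx _ hy => hforce ?_⟩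
    obtain ⟨σ', hσσ', hσ'⟩ := (c.eventually_mem_eval hy).exists_extends hx
    exact ⟨σ', hσσ', _, hσ'⟩

section DiagStep

variable {ι : Type*} [DecidableEq ι] (c : OracleCode)

noncomputable def diagStep (T : ι → List ℕ) (p : ι × ι) : ι → List ℕ :=
  let q := Classical.choose (exists_forcesDisagree c (T p.1) (T p.2))
  Function.update (Function.update T p.1 q.1) p.2 q.2

theorem prefix_diagStep (T : ι → List ℕ) (p : ι × ι) (i : ι) : T i <+: diagStep c T p i := by
  obtain ⟨h₁, h₂, -⟩ := Classical.choose_spec (exists_forcesDisagree c (T p.1) (T p.2))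
  unfold diagStep
  rcases eq_or_ne i p.2 with rfl | hi₂
  · simpa using h₂
  rcases eq_or_ne i p.1 with rfl | hi₁
  · simpa [hi₂] using h₁
  · simp [hi₁, hi₂]

theorem forcesDisagree_diagStep (T : ι → List ℕ) {p : ι × ι} (hp : p.1 ≠ p.2) :
    ForcesDisagree c (diagStep c T p p.1) (diagStep c T p p.2) := by
  obtain ⟨-, -, h⟩ := Classical.choose_spec (exists_forcesDisagree c (T p.1) (T p.2))
  simpa [diagStep, hp] using h

theorem prefix_foldl_diagStep (l : List (ι × ι)) (T : ι → List ℕ) (i : ι) :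
    T i <+: l.foldl (diagStep c) T i := by
  induction l generalizing T with
  | nil => exact List.prefix_rfl
  | cons p l ih => exact (prefix_diagStep c T p i).trans (ih _)

theorem forcesDisagree_foldl_diagStep {l : List (ι × ι)} {p : ι × ι} (hpl : p ∈ l)
    (hp : p.1 ≠ p.2) (T : ι → List ℕ) :
    ForcesDisagree c (l.foldl (diagStep c) T p.1) (l.foldl (diagStep c) T p.2) := by
  induction l generalizing T with
  | nil => simp at hpl
  | cons q l ih =>
    rcases List.mem_cons.1 hpl with rfl | hpl
    · exact (forcesDisagree_diagStep c T hp).mono (prefix_foldl_diagStep c l _ _)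
        (prefix_foldl_diagStep c l _ _)
    · exact ih hpl _

end DiagStep

noncomputable def codeOf : ℕ → OracleCode := Classical.choose (exists_surjective_nat OracleCode)

theorem codeOf_surjective : Function.Surjective codeOf :=
  Classical.choose_spec (exists_surjective_nat OracleCode)

-- Level `n + 1` diagonalizes against the code `codeOf n.unpair.1`, so every code is treated at
-- infinitely many levels; the padding `++ [0]` makes the strings grow along every branch.
noncomputable def tree : (n : ℕ) → (Fin n → Bool) → List ℕ
  | 0 => fun _ => []
  | n + 1 => (Finset.univ : Finset ((Fin (n + 1) → Bool) × (Fin (n + 1) → Bool))).toList.foldl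
      (diagStep (codeOf n.unpair.1)) fun w => tree n (Fin.init w) ++ [0]

noncomputable def branch (r : ℕ → Bool) (n : ℕ) : List ℕ := tree n fun i => r i

theorem branch_append_prefix (r : ℕ → Bool) (n : ℕ) : branch r n ++ [0] <+: branch r (n + 1) :=
  prefix_foldl_diagStep (codeOf n.unpair.1) _ (fun w => tree n (Fin.init w) ++ [0]) fun i => r i

theorem branch_prefix (r : ℕ → Bool) {m n : ℕ} (h : m ≤ n) : branch r m <+: branch r n := by
  induction n, h using Nat.le_induction with
  | base => exact List.prefix_rfl
  | succ n _ ih => exact ih.trans ((List.prefix_append _ _).trans (branch_append_prefix r n))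

theorem le_length_branch (r : ℕ → Bool) (n : ℕ) : n ≤ (branch r n).length := by
  induction n with
  | zero => exact Nat.zero_le _
  | succ n ih => simpa using (ih.trans_lt (by simp)).trans_le (branch_append_prefix r n).length_le

theorem forcesDisagree_branch {r r' : ℕ → Bool} {i n : ℕ} (hi : r i ≠ r' i) (hin : i ≤ n) :
    ForcesDisagree (codeOf n.unpair.1) (branch r' (n + 1)) (branch r (n + 1)) := by
  have hne : (fun j : Fin (n + 1) => r' j) ≠ fun j : Fin (n + 1) => r j :=
    fun h => hi (congrFun h ⟨i, Nat.lt_succ_of_le hin⟩).symm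
  exact forcesDisagree_foldl_diagStep _ (Finset.mem_toList.2 (Finset.mem_univ (_, _))) hne
    fun w : Fin (n + 1) → Bool => tree n (Fin.init w) ++ [0]

noncomputable def limitOf (s : ℕ → List ℕ) (i : ℕ) : ℕ := (s (i + 1)).getD i 0

theorem extends_limitOf {s : ℕ → List ℕ} (hs : ∀ {m n}, m ≤ n → s m <+: s n)
    (hlen : ∀ n, n ≤ (s n).length) (n : ℕ) : Extends (limitOf s) (s n) := by
  intro i hi
  have hi' : i < (s (i + 1)).length := Nat.lt_of_lt_of_le (Nat.lt_succ_self i) (hlen _)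
  rw [limitOf, List.getD_eq_getElem _ _ hi']
  rcases le_total (i + 1) n with h | h
  · exact (hs h).getElem hi'
  · exact ((hs h).getElem hi).symm

noncomputable def branchLimit (r : ℕ → Bool) : ℕ → ℕ := limitOf (branch r)

theorem extends_branchLimit (r : ℕ → Bool) (n : ℕ) : Extends (branchLimit r) (branch r n) :=
  extends_limitOf (branch_prefix r) (le_length_branch r) n

theorem not_reducible_branchLimit {r r' : ℕ → Bool} (h : r ≠ r') :
    ¬OracleTuringReducible (branchLimit r) (branchLimit r') := by
  intro hred
  obtain ⟨c, hc⟩ := hred.exists_code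
  obtain ⟨e, rfl⟩ := codeOf_surjective c
  obtain ⟨i, hi⟩ := Function.ne_iff.1 h
  have := forcesDisagree_branch hi (Nat.right_le_pair e i)
  rw [Nat.unpair_pair] at this
  obtain ⟨n, hn⟩ := this
  refine hn _ _ (extends_branchLimit r' _) (extends_branchLimit r _) ?_
  rw [hc]
  exact Part.mem_some _

theorem OracleTuringDegree.le_refl (d : OracleTuringDegree) : d ≤ d :=
  Quotient.inductionOn d OracleTuringReducible.refl

theorem OracleTuringDegree.le_trans {a b c : OracleTuringDegree} (hab : a ≤ b) (hbc : b ≤ c) :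
    a ≤ c := by
  induction a using Quotient.inductionOn
  induction b using Quotient.inductionOn
  induction c using Quotient.inductionOn
  exact OracleTuringReducible.trans hab hbc

def upperConeUnion {α β : Type*} [LE β] (f : α → β) (S : Set α) : Set β :=
  {y | ∃ a ∈ S, f a ≤ y}

theorem upperConeUnion_injective {α β : Type*} [LE β] {f : α → β} (hrefl : ∀ a, f a ≤ f a)
    (hf : ∀ a b, f a ≤ f b → a = b) : Function.Injective (upperConeUnion f) := by
  have key {S T : Set α} (h : upperConeUnion f S = upperConeUnion f T) : S ⊆ T := fun a ha => by
    obtain ⟨b, hb, hba⟩ : f a ∈ upperConeUnion f T := h ▸ ⟨a, ha, hrefl a⟩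
    exact hf b a hba ▸ hb
  exact fun S T h => (key h).antisymm (key h.symm)

open Cardinal in
theorem mk_relationPairs_lt : #((ℕ → ℕ → Prop) × (ℕ → ℕ → Prop)) < #(Set (ℕ → Bool)) := by
  simpa [mk_set] using cantor 𝔠

/-- Some upward closed set of Turing degrees is not a reducibility
spectrum. -/
theorem stmt_3 :
    ∃ A : Set OracleTuringDegree, (∀ d ∈ A, ∀ d' : OracleTuringDegree, d ≤ d' → d' ∈ A) ∧
      ∀ R S : ℕ → ℕ → Prop, Equivalence R → Equivalence S → SpecRed R S ≠ A := by
  by_contra! h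
  let U := upperConeUnion fun r => OracleTuringDegree.deg (branchLimit r)
  have hU : Function.Injective U :=
    upperConeUnion_injective (fun _ => OracleTuringDegree.le_refl _) fun _ _ hle =>
      by_contra fun hne => not_reducible_branchLimit hne hle
  have hspec : Set.range U ⊆ Set.range fun p : (ℕ → ℕ → Prop) × (ℕ → ℕ → Prop) =>
      SpecRed p.1 p.2 := by
    rintro _ ⟨S, rfl⟩
    obtain ⟨R, R', -, -, hRR'⟩ := h (U S) fun d ⟨r, hr, hrd⟩ d' hdd' =>
      ⟨r, hr, OracleTuringDegree.le_trans hrd hdd'⟩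
    exact ⟨(R, R'), hRR'⟩
  refine mk_relationPairs_lt.not_ge ?_
  calc Cardinal.mk (Set (ℕ → Bool)) = Cardinal.mk (Set.range U) := (Cardinal.mk_range_eq U hU).symm
    _ ≤ _ := Cardinal.mk_le_mk_of_subset hspec
    _ ≤ _ := Cardinal.mk_range_le
end

section
/- Let R be an equivalence relation on ℕ with infinitely many equivalence classes and let d be a Turing degree. Then Id is d-computably reducible to R if and only if there is an infinite partial transversal A of R such that A is computable in d. -/
namespace OracleRecursiveIn

variable {O : ℕ → ℕ}

theorem of_partrec {f : ℕ →. ℕ} (hf : Nat.Partrec f) : OracleRecursiveIn O f := by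
  induction hf with
  | zero => exact .zero
  | succ => exact .succ
  | left => exact .left
  | right => exact .right
  | pair _ _ ih₁ ih₂ => exact .pair ih₁ ih₂
  | comp _ _ ih₁ ih₂ => exact .comp ih₁ ih₂
  | prec _ _ ih₁ ih₂ => exact .prec ih₁ ih₂
  | rfind _ ih => exact .rfind ih

theorem of_computable {f : ℕ → ℕ} (hf : Computable f) : OracleRecursiveIn O f :=
  of_partrec (Partrec.nat_iff.mp hf)

theorem of_eq {f g : ℕ →. ℕ} (hf : OracleRecursiveIn O f) (H : ∀ n, f n = g n) :
    OracleRecursiveIn O g :=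
  funext H ▸ hf

theorem comp_total {f g : ℕ → ℕ} (hf : OracleRecursiveIn O f) (hg : OracleRecursiveIn O g) :
    OracleRecursiveIn O ↑(fun n => f (g n)) :=
  (OracleRecursiveIn.comp hf hg).of_eq fun n => Part.bind_some (g n) _

theorem pair_total {f g : ℕ → ℕ} (hf : OracleRecursiveIn O f) (hg : OracleRecursiveIn O g) :
    OracleRecursiveIn O ↑(fun n => Nat.pair (f n) (g n)) :=
  (OracleRecursiveIn.pair hf hg).of_eq fun n => by simp [PFun.coe_val, Seq.seq]

theorem comp₂ {φ : ℕ → ℕ → ℕ} (hφ : Computable₂ φ) {f g : ℕ → ℕ}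
    (hf : OracleRecursiveIn O f) (hg : OracleRecursiveIn O g) :
    OracleRecursiveIn O ↑(fun n => φ (f n) (g n)) := by
  have hφ' : Computable fun p : ℕ => φ p.unpair.1 p.unpair.2 :=
    hφ.comp (Computable.fst.comp Computable.unpair) (Computable.snd.comp Computable.unpair)
  simpa using comp_total (of_computable hφ') (pair_total hf hg)

theorem nat_find {p : ℕ → ℕ → Prop} [∀ a, DecidablePred (p a)] (H : ∀ a, ∃ n, p a n)
    (hp : OracleRecursiveIn O
      ↑(fun q : ℕ => if p q.unpair.1 q.unpair.2 then 0 else (1 : ℕ))) :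
    OracleRecursiveIn O ↑(fun a => Nat.find (H a)) := by
  refine (OracleRecursiveIn.rfind hp).of_eq fun a =>
    Part.eq_some_iff.mpr (Nat.mem_rfind.mpr ⟨?_, fun hm => ?_⟩)
  · simp [Nat.find_spec (H a)]
  · simp [Nat.find_min (H a) hm]

theorem nat_rec (s₀ : ℕ) {s : ℕ → ℕ → ℕ}
    (hs : OracleRecursiveIn O ↑(fun q : ℕ => s q.unpair.1 q.unpair.2)) :
    OracleRecursiveIn O ↑(fun n => Nat.rec (motive := fun _ => ℕ) s₀ s n) := by
  have hstep : OracleRecursiveIn O ↑(fun z : ℕ => s z.unpair.2.unpair.1 z.unpair.2.unpair.2) :=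
    comp_total hs (of_computable (Computable.snd.comp Computable.unpair))
  have hprec : OracleRecursiveIn O
      ↑(fun q : ℕ => Nat.rec (motive := fun _ => ℕ) s₀ s q.unpair.2) := by
    refine (OracleRecursiveIn.prec (of_computable (Computable.const s₀)) hstep).of_eq fun q => ?_
    simp only [Nat.unpaired, PFun.coe_val]
    induction q.unpair.2 with
    | zero => rfl
    | succ n ih => simp_all
  simpa using comp_total hprec
    (of_computable (Primrec₂.natPair.comp (Primrec.const 0) Primrec.id).to_comp)

end OracleRecursiveIn

theorem Function.Injective.exists_le_apply {f : ℕ → ℕ} (hf : Function.Injective f) (x : ℕ) :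
    ∃ n, x ≤ f n :=
  (hf.nat_tendsto_atTop.eventually_ge_atTop x).exists

-- The left-to-right maxima of `f`, in the form in which `f` decides membership.
def recordValues (f : ℕ → ℕ) (hf : ∀ x, ∃ n, x ≤ f n) : Set ℕ :=
  {x | f (Nat.find (hf x)) = x}

section recordValues

variable {f : ℕ → ℕ} (hf : ∀ x, ∃ n, x ≤ f n)

theorem recordValues_subset_range : recordValues f hf ⊆ Set.range f :=
  fun _ hx => ⟨_, hx⟩

theorem recordValues_infinite : (recordValues f hf).Infinite := by
  refine Set.infinite_of_forall_exists_gt fun b => ?_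
  set n := Nat.find (hf (b + 1))
  have hbn : b + 1 ≤ f n := Nat.find_spec (hf (b + 1))
  have hfind : Nat.find (hf (f n)) = n :=
    (Nat.find_eq_iff _).2 ⟨le_rfl, fun m hm hle => Nat.find_min (hf (b + 1)) hm (hbn.trans hle)⟩
  exact ⟨f n, congrArg f hfind, hbn⟩

theorem OracleRecursiveIn.charFun_recordValues {O : ℕ → ℕ} (hfO : OracleRecursiveIn O f) :
    OracleRecursiveIn O ↑(charFun (recordValues f hf)) := by
  have hfind : OracleRecursiveIn O ↑(fun x => Nat.find (hf x)) :=
    nat_find hf (comp₂ (φ := fun a b => if a ≤ b then 0 else 1)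
      (Primrec.ite Primrec.nat_le (Primrec.const 0) (Primrec.const 1)).to_comp
      .left (comp_total hfO .right))
  refine (comp₂ (φ := fun a b => if a = b then 1 else 0)
    (Primrec.ite Primrec.eq (Primrec.const 1) (Primrec.const 0)).to_comp
    (comp_total hfO hfind) (of_computable Computable.id)).of_eq fun x => ?_
  simp [charFun, recordValues]

end recordValues

theorem PartialTransversal.mono {R : ℕ → ℕ → Prop} {A B : Set ℕ}
    (hB : PartialTransversal R B) (hAB : A ⊆ B) : PartialTransversal R A :=
  fun x hx y hy => hB x (hAB hx) y (hAB hy)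

theorem partialTransversal_range {R : ℕ → ℕ → Prop} {f : ℕ → ℕ}
    (hf : ∀ x y, x = y ↔ R (f x) (f y)) : PartialTransversal R (Set.range f) := by
  rintro _ ⟨x, rfl⟩ _ ⟨y, rfl⟩ hne hxy
  exact hne (congrArg f ((hf x y).2 hxy))

theorem PartialTransversal.nth_reduction {R : ℕ → ℕ → Prop} {A : Set ℕ}
    (hT : PartialTransversal R A) (hR : ∀ x, R x x) (hA : A.Infinite) :
    ∀ x y, x = y ↔ R (Nat.nth (· ∈ A) x) (Nat.nth (· ∈ A) y) := by
  refine fun x y => ⟨fun h => h ▸ hR _, fun hxy => ?_⟩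
  by_contra hne
  exact hT _ (Nat.nth_mem_of_infinite hA x) _ (Nat.nth_mem_of_infinite hA y)
    ((Nat.nth_injective hA).ne hne) hxy

theorem Nat.find_lt_count_succ_eq_nth {p : ℕ → Prop} [DecidablePred p] (hp : {x | p x}.Infinite)
    (a : ℕ) (h : ∃ n, a < count p (n + 1)) : Nat.find h = nth p a :=
  (Nat.find_eq_iff h).2 ⟨(lt_nth_iff_count_lt hp).2 (lt_add_one _),
    fun _ hm hlt => (lt_nth_iff_count_lt hp).1 hlt |>.not_ge hm⟩

section nth

variable {O : ℕ → ℕ} {A : Set ℕ} [DecidablePred (· ∈ A)]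

theorem OracleRecursiveIn.count_mem (hA : OracleRecursiveIn O ↑(charFun A)) :
    OracleRecursiveIn O ↑(Nat.count (· ∈ A)) := by
  have hstep : OracleRecursiveIn O ↑(fun q : ℕ => q.unpair.2 + charFun A q.unpair.1) :=
    comp₂ Primrec.nat_add.to_comp .right (comp_total hA .left)
  refine (nat_rec 0 (s := fun y c => c + charFun A y) hstep).of_eq fun n => congrArg Part.some ?_
  induction n with
  | zero => exact (Nat.count_zero _).symm
  | succ n ih => simp [Nat.count_succ, ← ih, charFun]

theorem OracleRecursiveIn.nth_mem (hAinf : A.Infinite) (hA : OracleRecursiveIn O ↑(charFun A)) :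
    OracleRecursiveIn O ↑(Nat.nth (· ∈ A)) := by
  have H : ∀ a, ∃ n, a < Nat.count (· ∈ A) (n + 1) := fun a =>
    ⟨Nat.nth (· ∈ A) a, (Nat.lt_nth_iff_count_lt (p := (· ∈ A)) hAinf).2 (lt_add_one _)⟩
  refine (nat_find H (comp₂ (φ := fun a c => if a < c then 0 else 1)
    (Primrec.ite Primrec.nat_lt (Primrec.const 0) (Primrec.const 1)).to_comp
    .left (comp_total (count_mem hA) (comp_total .succ .right)))).of_eq fun a =>
    congrArg Part.some (Nat.find_lt_count_succ_eq_nth (p := (· ∈ A)) hAinf a (H a))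

end nth

theorem stmt_9_general (R : ℕ → ℕ → Prop) (hR : Equivalence R)
    (d : OracleTuringDegree) :
    ReducibleIn d (fun x y => x = y) R ↔
      ∃ A : Set ℕ, A.Infinite ∧ PartialTransversal R A ∧
        d.ComputableIn ↑(charFun A) := by
  classical
  refine Quotient.inductionOn d fun O => ⟨?_, ?_⟩
  · rintro ⟨f, hfO, hf⟩
    have hunb : ∀ x, ∃ n, x ≤ f n :=
      Function.Injective.exists_le_apply fun x y hxy => (hf x y).2 (hxy ▸ hR.refl _)
    exact ⟨recordValues f hunb, recordValues_infinite hunb,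
      (partialTransversal_range hf).mono (recordValues_subset_range hunb),
      OracleRecursiveIn.charFun_recordValues hunb hfO⟩
  · rintro ⟨A, hAinf, hT, hA⟩
    exact ⟨Nat.nth (· ∈ A), OracleRecursiveIn.nth_mem hAinf hA,
      hT.nth_reduction hR.refl hAinf⟩

/-- For `R` with infinitely many classes, `Id ≤_d R` iff `d`
computes an infinite partial transversal of `R`. -/
theorem stmt_9 (R : ℕ → ℕ → Prop) (hR : Equivalence R) (hinf : Infinite (Quot R))
    (d : OracleTuringDegree) :
    ReducibleIn d (fun x y => x = y) R ↔
      ∃ A : Set ℕ, A.Infinite ∧ PartialTransversal R A ∧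
        d.ComputableIn ↑(charFun A) :=
  stmt_9_general R hR d
end
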